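/- arXiv:math/9412218 — 6 statements merged into one kernel-verified Lean document; each statement's English description precedes it below -/
import Mathlib

section
/- For every 1 < p < ∞, the polynomial equation (p-1)x^p - p x^{p-1} - 1 = 0 has a unique positive solution. -/
/-! For `x > 0` the equation reads `x ^ (p - 1) * ((p - 1) * x - p) = 1`. The left side is `≤ 0`
up to `x = p / (p - 1)` and, past that point, a product of two nonnegative increasing factors, one
of them strictly increasing and positive; so it is strictly increasing there, and it crosses `1`
exactly once by the intermediate value theorem. -/

open Real Set

theorem mul_rpow_sub_mul_rpow_sub_one {x : ℝ} (hx : 0 < x) (a b p : ℝ) :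
    a * x ^ p - b * x ^ (p - 1) = x ^ (p - 1) * (a * x - b) := by
  rw [rpow_sub_one hx.ne']
  field_simp

section

variable {q a b : ℝ}

theorem strictMonoOn_rpow_mul_sub (hq : 0 < q) (ha : 0 < a) (hb : 0 ≤ b) :
    StrictMonoOn (fun x : ℝ => x ^ q * (a * x - b)) (Ici (b / a)) := by
  intro x hx y hy hxy
  simp only [mem_Ici, div_le_iff₀ ha] at hx hy
  have hx0 : 0 ≤ x := by nlinarith
  calc x ^ q * (a * x - b) ≤ y ^ q * (a * x - b) := by
        gcongr
        linarith
    _ < y ^ q * (a * y - b) := by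
        have : 0 < y ^ q := rpow_pos_of_pos (hx0.trans_lt hxy) q
        gcongr

theorem div_le_of_rpow_mul_sub_pos (ha : 0 < a) {x : ℝ} (hx : 0 ≤ x)
    (hpos : 0 < x ^ q * (a * x - b)) : b / a ≤ x := by
  by_contra! hlt
  rw [lt_div_iff₀ ha] at hlt
  have : x ^ q * (a * x - b) ≤ 0 :=
    mul_nonpos_of_nonneg_of_nonpos (rpow_nonneg hx q) (by linarith)
  linarith

theorem exists_rpow_mul_sub_eq_one (hq : 0 ≤ q) (ha : 0 < a) (hab : a ≤ b + 1) :
    ∃ x ∈ Icc (b / a) ((b + 1) / a), x ^ q * (a * x - b) = 1 := by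
  have hcont : Continuous fun x : ℝ => x ^ q * (a * x - b) := by
    have := continuous_rpow_const hq
    fun_prop
  have hle : b / a ≤ (b + 1) / a := by gcongr; linarith
  refine intermediate_value_Icc hle hcont.continuousOn ⟨?_, ?_⟩
  · simp [mul_div_cancel₀ b ha.ne']
  · have hone : 1 ≤ (b + 1) / a := (one_le_div ha).mpr hab
    simpa [mul_div_cancel₀ (b + 1) ha.ne'] using one_le_rpow hone hq

end

/-- For every `1 < p < ∞`, the equation `(p-1)x^p - p x^(p-1) - 1 = 0`
has a unique positive solution. -/
theorem unique_positive_root (p : ℝ) (hp : 1 < p) :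
    ∃! x : ℝ, 0 < x ∧ (p - 1) * x ^ p - p * x ^ (p - 1) - 1 = 0 := by
  have hq : 0 < p - 1 := by linarith
  have hp0 : 0 < p := by linarith
  have root_iff {x : ℝ} (hx : 0 < x) :
      (p - 1) * x ^ p - p * x ^ (p - 1) - 1 = 0 ↔ x ^ (p - 1) * ((p - 1) * x - p) = 1 := by
    rw [mul_rpow_sub_mul_rpow_sub_one hx, sub_eq_zero]
  obtain ⟨x, ⟨hx_ge, -⟩, hx⟩ := exists_rpow_mul_sub_eq_one hq.le hq (by linarith : p - 1 ≤ p + 1)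
  have hx0 : 0 < x := (div_pos hp0 hq).trans_le hx_ge
  refine ⟨x, ⟨hx0, (root_iff hx0).mpr hx⟩, fun y ⟨hy0, hy⟩ => ?_⟩
  rw [root_iff hy0] at hy
  have hy_ge : p / (p - 1) ≤ y := div_le_of_rpow_mul_sub_pos hq hy0.le (by rw [hy]; exact one_pos)
  exact (strictMonoOn_rpow_mul_sub hq hq hp0.le).injOn hy_ge hx_ge (hy.trans hx.symm)
end

section
/- For every 1 < p < ∞, the unique positive solution c_p of (p-1)x^p - p x^{p-1} - 1 = 0 satisfies p/(p-1) < c_p < 2p/(p-1). -/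
/-- The unique positive root `c` of `(p-1)x^p - p x^(p-1) - 1 = 0` satisfies
`p/(p-1) < c < 2p/(p-1)`. -/
theorem root_bounds (p c : ℝ) (hp : 1 < p) (hc : 0 < c)
    (hroot : (p - 1) * c ^ p - p * c ^ (p - 1) - 1 = 0) :
    p / (p - 1) < c ∧ c < 2 * p / (p - 1) := by
  have hp1 : (0:ℝ) < p - 1 := by linarith
  have h1 : c ^ p = c ^ (p - 1) * c := by
    nth_rewrite 1 [show p = p - 1 + 1 by ring]
    rw [Real.rpow_add hc, Real.rpow_one]
  rw [h1] at hroot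
  have hpow : 0 < c ^ (p - 1) := Real.rpow_pos_of_pos hc _
  have hkey : c ^ (p - 1) * ((p - 1) * c - p) = 1 := by ring_nf; ring_nf at hroot; linarith
  have hlow : p < (p - 1) * c := by
    by_contra h
    push_neg at h
    nlinarith
  constructor
  · rw [div_lt_iff₀ hp1]; linarith
  · by_contra h
    push_neg at h
    rw [div_le_iff₀ hp1] at h
    have hc1 : 1 < c := by nlinarith
    have hcp : 1 < c ^ (p - 1) := (Real.one_lt_rpow_iff_of_pos hc).mpr (Or.inl ⟨hc1, hp1⟩)
    nlinarith
end

section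
/- Sunrise lemma (right version): Let f ≥ 0 be integrable on ℝ, and for λ > 0 let D_λ = {x : M_R f(x) > λ} where M_R f(x) = sup_{b > x} (1/(b-x)) ∫_x^b f(t) dt. Then λ · |D_λ| = ∫_{D_λ} f(t) dt. -/
/-!
`M_R f x > λ` means `∫_x^b f > λ (b - x)` for some `b > x`, i.e. that `x` lies in the shadow of
`G x = ∫_0^x f - λ x`: some point to its right is strictly higher. `G` is continuous and tends to
`∓∞` at `±∞`, so by Riesz's rising sun lemma the shadow is open and each of its (countably many)
components `(a, b)` has `G a = G b`, that is `∫_a^b f = λ (b - a)`. Summing over the components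
gives the identity.
-/

open MeasureTheory Set
open scoped ENNReal

/-- The right-sided uncentered maximal function. -/
noncomputable def MR (f : ℝ → ℝ) (x : ℝ) : ℝ≥0∞ :=
  ⨆ (b : ℝ) (_ : x < b), ENNReal.ofReal ((b - x)⁻¹ * ∫ t in x..b, f t)

open Filter Topology

section ComponentIntervals

variable {U : Set ℝ}

theorem exists_Ioo_mem_subset_of_isOpen (hU : IsOpen U) (hbelow : ¬BddBelow Uᶜ)
    (habove : ¬BddAbove Uᶜ) {x : ℝ} (hx : x ∈ U) :
    ∃ a b, x ∈ Ioo a b ∧ Ioo a b ⊆ U ∧ a ∉ U ∧ b ∉ U := by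
  obtain ⟨l, hlU, hlx⟩ := not_bddBelow_iff.1 hbelow x
  obtain ⟨r, hrU, hxr⟩ := not_bddAbove_iff.1 habove x
  have hbdd_left : BddAbove (Iic x ∩ Uᶜ) := ⟨x, fun _ hy => hy.1⟩
  have hbdd_right : BddBelow (Ici x ∩ Uᶜ) := ⟨x, fun _ hy => hy.1⟩
  have ha : sSup (Iic x ∩ Uᶜ) ∈ Iic x ∩ Uᶜ :=
    (isClosed_Iic.inter hU.isClosed_compl).csSup_mem ⟨l, hlx.le, hlU⟩ hbdd_left
  have hb : sInf (Ici x ∩ Uᶜ) ∈ Ici x ∩ Uᶜ :=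
    (isClosed_Ici.inter hU.isClosed_compl).csInf_mem ⟨r, hxr.le, hrU⟩ hbdd_right
  refine ⟨_, _, ⟨ha.1.lt_of_ne ?_, hb.1.lt_of_ne ?_⟩, ?_, ha.2, hb.2⟩
  · intro h; exact ha.2 (by rwa [h])
  · intro h; exact hb.2 (by rwa [← h])
  rintro y ⟨hay, hyb⟩
  by_contra hy
  rcases le_total y x with hyx | hxy
  · exact (le_csSup hbdd_left ⟨hyx, hy⟩).not_gt hay
  · exact (csInf_le hbdd_right ⟨hxy, hy⟩).not_gt hyb

theorem Ioo_eq_of_not_disjoint {a b c d : ℝ} (hab : Ioo a b ⊆ U) (hcd : Ioo c d ⊆ U)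
    (ha : a ∉ U) (hb : b ∉ U) (hc : c ∉ U) (hd : d ∉ U)
    (h : ¬Disjoint (Ioo a b) (Ioo c d)) : Ioo a b = Ioo c d := by
  obtain ⟨z, ⟨haz, hzb⟩, ⟨hcz, hzd⟩⟩ := not_disjoint_iff.1 h
  have hac : a = c := le_antisymm
    (not_lt.1 fun hca => ha (hcd ⟨hca, haz.trans hzd⟩))
    (not_lt.1 fun hac => hc (hab ⟨hac, hcz.trans hzb⟩))
  have hbd : b = d := le_antisymm
    (not_lt.1 fun hdb => hd (hab ⟨haz.trans hzd, hdb⟩))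
    (not_lt.1 fun hbd => hb (hcd ⟨hcz.trans hzb, hbd⟩))
  rw [hac, hbd]

theorem measure_eq_of_forall_Ioo (hU : IsOpen U) (hbelow : ¬BddBelow Uᶜ)
    (habove : ¬BddAbove Uᶜ) {μ ν : Measure ℝ}
    (h : ∀ a b, a < b → Ioo a b ⊆ U → a ∉ U → b ∉ U → μ (Ioo a b) = ν (Ioo a b)) :
    μ U = ν U := by
  set S : Set (Set ℝ) := {I | ∃ a b, a < b ∧ I = Ioo a b ∧ I ⊆ U ∧ a ∉ U ∧ b ∉ U}
  have hcover : ⋃₀ S = U := by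
    refine subset_antisymm (sUnion_subset ?_) fun x hx => ?_
    · rintro _ ⟨a, b, -, rfl, hsub, -⟩
      exact hsub
    · obtain ⟨a, b, hxab, hsub, ha, hb⟩ := exists_Ioo_mem_subset_of_isOpen hU hbelow habove hx
      exact ⟨Ioo a b, ⟨a, b, hxab.1.trans hxab.2, rfl, hsub, ha, hb⟩, hxab⟩
  have hdisj : S.PairwiseDisjoint id := by
    rintro _ ⟨a, b, -, rfl, hab, ha, hb⟩ _ ⟨c, d, -, rfl, hcd, hc, hd⟩ hne
    by_contra h
    exact hne (Ioo_eq_of_not_disjoint hab hcd ha hb hc hd h)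
  have hcount : S.Countable := hdisj.countable_of_isOpen
    (by rintro _ ⟨a, b, -, rfl, -⟩; exact isOpen_Ioo)
    (by rintro _ ⟨a, b, hab, rfl, -⟩; exact nonempty_Ioo.2 hab)
  have hmeas : ∀ I ∈ S, MeasurableSet I := by
    rintro _ ⟨a, b, -, rfl, -⟩
    exact measurableSet_Ioo
  rw [← hcover, measure_sUnion hcount hdisj hmeas, measure_sUnion hcount hdisj hmeas]
  exact tsum_congr fun ⟨_, a, b, hab, hI, hsub, ha, hb⟩ => by
    subst hI; exact h a b hab hsub ha hb

end ComponentIntervals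

section RisingSun

def shadowSet (G : ℝ → ℝ) : Set ℝ := {x | ∃ y, x < y ∧ G x < G y}

variable {G : ℝ → ℝ}

theorem isOpen_shadowSet (hG : Continuous G) : IsOpen (shadowSet G) := by
  have : shadowSet G = ⋃ y, Iio y ∩ G ⁻¹' Iio (G y) := by
    ext x; simp [shadowSet]
  rw [this]
  exact isOpen_iUnion fun y => isOpen_Iio.inter (isOpen_Iio.preimage hG)

theorem exists_isMaxOn_Ici (hG : Continuous G) (hG_top : Tendsto G atTop atBot) (x : ℝ) :
    ∃ m ∈ Ici x, IsMaxOn G (Ici x) m := by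
  refine hG.continuousOn.exists_isMaxOn' isClosed_Ici self_mem_Ici ?_
  rw [cocompact_eq_atBot_atTop, inf_sup_right, (disjoint_atBot_principal_Ici x).eq_bot,
    bot_sup_eq]
  exact (hG_top.eventually (eventually_le_atBot (G x))).filter_mono inf_le_left

theorem notMem_shadowSet_of_isMaxOn {x m : ℝ} (hm : m ∈ Ici x) (hmax : IsMaxOn G (Ici x) m) :
    m ∉ shadowSet G :=
  fun ⟨_, hmy, hGy⟩ => (hmax (mem_Ici.2 (hm.trans hmy.le))).not_gt hGy

theorem not_bddAbove_compl_shadowSet (hG : Continuous G) (hG_top : Tendsto G atTop atBot) :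
    ¬BddAbove (shadowSet G)ᶜ := by
  refine not_bddAbove_iff.2 fun x => ?_
  obtain ⟨m, hm, hmax⟩ := exists_isMaxOn_Ici hG hG_top (x + 1)
  exact ⟨m, notMem_shadowSet_of_isMaxOn hm hmax, by linarith [mem_Ici.1 hm]⟩

theorem not_bddBelow_compl_shadowSet (hG : Continuous G) (hG_top : Tendsto G atTop atBot)
    (hG_bot : Tendsto G atBot atTop) : ¬BddBelow (shadowSet G)ᶜ := by
  refine not_bddBelow_iff.2 fun x => ?_
  obtain ⟨m, hm, hmax⟩ := exists_isMaxOn_Ici hG hG_top x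
  obtain ⟨x', hGx', hx'⟩ :=
    ((hG_bot.eventually_gt_atTop (G m)).and (eventually_lt_atBot x)).exists
  obtain ⟨m', hm', hmax'⟩ := exists_isMaxOn_Ici hG hG_top x'
  refine ⟨m', notMem_shadowSet_of_isMaxOn hm' hmax', not_le.1 fun hxm' => ?_⟩
  have hle : G m' ≤ G m := hmax (mem_Ici.2 hxm')
  have hge : G x' ≤ G m' := hmax' self_mem_Ici
  linarith

/-- The maximum of `G` on `[x, b]` cannot lie in the shadow, hence it is attained at `b`. -/
theorem le_of_Ico_subset_shadowSet {x b : ℝ} (hG : ContinuousOn G (Icc x b)) (hxb : x ≤ b)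
    (hsub : Ico x b ⊆ shadowSet G) (hb : b ∉ shadowSet G) : G x ≤ G b := by
  obtain ⟨m, hm, hmax⟩ := isCompact_Icc.exists_isMaxOn (nonempty_Icc.2 hxb) hG
  suffices hmb : m = b from hmb ▸ hmax ⟨le_rfl, hxb⟩
  by_contra hmb
  obtain ⟨y, hmy, hGy⟩ := hsub ⟨hm.1, hm.2.lt_of_ne hmb⟩
  rcases le_or_gt y b with hyb | hby
  · exact (hmax ⟨hm.1.trans hmy.le, hyb⟩).not_gt hGy
  · exact hb ⟨y, hby, (hmax ⟨hxb, le_rfl⟩).trans_lt hGy⟩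

theorem eq_of_Ioo_subset_shadowSet (hG : Continuous G) {a b : ℝ} (hab : a < b)
    (hsub : Ioo a b ⊆ shadowSet G) (ha : a ∉ shadowSet G) (hb : b ∉ shadowSet G) :
    G a = G b := by
  refine le_antisymm ?_ (not_lt.1 fun h => ha ⟨b, hab, h⟩)
  have hIoo : Ioo a b ⊆ {x | G x ≤ G b} := fun x hx =>
    le_of_Ico_subset_shadowSet hG.continuousOn hx.2.le
      (fun y hy => hsub ⟨hx.1.trans_le hy.1, hy.2⟩) hb
  have hIcc := (isClosed_le hG continuous_const).closure_subset_iff.2 hIoo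
  rw [closure_Ioo hab.ne] at hIcc
  exact hIcc (left_mem_Icc.2 hab.le)

theorem measure_shadowSet_eq (hG : Continuous G) (hG_top : Tendsto G atTop atBot)
    (hG_bot : Tendsto G atBot atTop) {μ ν : Measure ℝ}
    (h : ∀ a b, a < b → G a = G b → μ (Ioo a b) = ν (Ioo a b)) :
    μ (shadowSet G) = ν (shadowSet G) :=
  measure_eq_of_forall_Ioo (isOpen_shadowSet hG) (not_bddBelow_compl_shadowSet hG hG_top hG_bot)
    (not_bddAbove_compl_shadowSet hG hG_top) fun a b hab hsub ha hb =>
      h a b hab (eq_of_Ioo_subset_shadowSet hG hab hsub ha hb)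

end RisingSun

section Sunrise

variable {f : ℝ → ℝ} {lam : ℝ}

noncomputable def sunriseFunction (f : ℝ → ℝ) (lam x : ℝ) : ℝ :=
  (∫ t in (0 : ℝ)..x, f t) - lam * x

theorem continuous_sunriseFunction (hint : Integrable f) :
    Continuous (sunriseFunction f lam) :=
  (intervalIntegral.continuous_primitive (fun _ _ => hint.intervalIntegrable) 0).sub
    (continuous_const.mul continuous_id)

theorem tendsto_sunriseFunction_atTop (hint : Integrable f) (hlam : 0 < lam) :
    Tendsto (sunriseFunction f lam) atTop atBot := by
  have hprim : Tendsto (fun x => ∫ t in (0 : ℝ)..x, f t) atTop (𝓝 (∫ t in Ioi 0, f t)) :=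
    intervalIntegral_tendsto_integral_Ioi 0 hint.integrableOn tendsto_id
  have hlin : Tendsto (fun x => -(lam * x)) atTop atBot :=
    tendsto_neg_atTop_atBot.comp (tendsto_id.const_mul_atTop hlam)
  exact (hprim.add_atBot hlin).congr fun x => (sub_eq_add_neg _ _).symm

theorem tendsto_sunriseFunction_atBot (hint : Integrable f) (hlam : 0 < lam) :
    Tendsto (sunriseFunction f lam) atBot atTop := by
  have hprim : Tendsto (fun x => ∫ t in (0 : ℝ)..x, f t) atBot (𝓝 (-∫ t in Iic 0, f t)) := by
    refine (intervalIntegral_tendsto_integral_Iic 0 hint.integrableOn tendsto_id).neg.congr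
      fun x => ?_
    rw [intervalIntegral.integral_symm, neg_neg, id]
  have hlin : Tendsto (fun x => -(lam * x)) atBot atTop :=
    tendsto_neg_atBot_atTop.comp (tendsto_id.const_mul_atBot hlam)
  exact (hprim.add_atTop hlin).congr fun x => (sub_eq_add_neg _ _).symm

theorem intervalIntegral_eq_sunriseFunction_sub (hint : Integrable f) (lam x b : ℝ) :
    ∫ t in x..b, f t = sunriseFunction f lam b - sunriseFunction f lam x + lam * (b - x) := by
  rw [← intervalIntegral.integral_interval_sub_left hint.intervalIntegrable
    hint.intervalIntegrable]
  simp only [sunriseFunction]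
  ring

theorem ofReal_lt_MR_iff (hint : Integrable f) (hlam : 0 < lam) (x : ℝ) :
    ENNReal.ofReal lam < MR f x ↔ x ∈ shadowSet (sunriseFunction f lam) := by
  simp only [MR, lt_iSup_iff, ENNReal.ofReal_lt_ofReal_iff_of_nonneg hlam.le, shadowSet,
    mem_ofPred_eq, exists_prop]
  refine exists_congr fun b => and_congr_right fun hxb => ?_
  rw [inv_mul_eq_div, lt_div_iff₀ (sub_pos.2 hxb),
    intervalIntegral_eq_sunriseFunction_sub hint lam]
  constructor <;> intro h <;> linarith

theorem ofReal_mul_volume_Ioo_eq_lintegral (hf : 0 ≤ f) (hint : Integrable f) (hlam : 0 ≤ lam)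
    {a b : ℝ} (hab : a < b) (hG : sunriseFunction f lam a = sunriseFunction f lam b) :
    ENNReal.ofReal lam * volume (Ioo a b) = ∫⁻ t in Ioo a b, ENNReal.ofReal (f t) := by
  have hI : ∫ t in Ioo a b, f t = lam * (b - a) := by
    rw [← integral_Ioc_eq_integral_Ioo, ← intervalIntegral.integral_of_le hab.le,
      intervalIntegral_eq_sunriseFunction_sub hint lam, hG, sub_self, zero_add]
  rw [Real.volume_Ioo, ← ENNReal.ofReal_mul hlam, ← hI,
    ofReal_integral_eq_lintegral_ofReal hint.integrableOn (ae_of_all _ hf)]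

end Sunrise

/-- Sunrise lemma, right version: `λ |D_λ| = ∫_{D_λ} f`. -/
theorem sunrise_right (f : ℝ → ℝ) (hf : 0 ≤ f) (hint : Integrable f)
    (lam : ℝ) (hlam : 0 < lam) :
    ENNReal.ofReal lam * volume {x | ENNReal.ofReal lam < MR f x}
      = ∫⁻ t in {x | ENNReal.ofReal lam < MR f x}, ENNReal.ofReal (f t) := by
  have hD : {x | ENNReal.ofReal lam < MR f x} = shadowSet (sunriseFunction f lam) :=
    Set.ext (ofReal_lt_MR_iff hint hlam)
  have hcont := continuous_sunriseFunction (lam := lam) hint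
  have key := measure_shadowSet_eq hcont (tendsto_sunriseFunction_atTop hint hlam)
    (tendsto_sunriseFunction_atBot hint hlam) (μ := ENNReal.ofReal lam • volume)
    (ν := volume.withDensity fun t => ENNReal.ofReal (f t)) fun a b hab hG => by
      rw [Measure.smul_apply, smul_eq_mul, withDensity_apply _ measurableSet_Ioo]
      exact ofReal_mul_volume_Ioo_eq_lintegral hf hint hlam.le hab hG
  rwa [Measure.smul_apply, smul_eq_mul,
    withDensity_apply _ (isOpen_shadowSet hcont).measurableSet, ← hD] at key
end

section
/- Sunrise lemma (left version): Let f ≥ 0 be integrable on ℝ, and for λ > 0 let C_λ = {x : M_L f(x) > λ} where M_L f(x) = sup_{a < x} (1/(x-a)) ∫_a^x f(t) dt. Then λ · |C_λ| = ∫_{C_λ} f(t) dt. -/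
open MeasureTheory Set
open scoped ENNReal

/-- The left-sided uncentered maximal function. -/
noncomputable def ML (f : ℝ → ℝ) (x : ℝ) : ℝ≥0∞ :=
  ⨆ (a : ℝ) (_ : a < x), ENNReal.ofReal ((x - a)⁻¹ * ∫ t in a..x, f t)

namespace SunriseAux

noncomputable def F (f : ℝ → ℝ) (lam : ℝ) (x : ℝ) : ℝ :=
  (∫ t in (0:ℝ)..x, f t) - lam * x

def Uset (f : ℝ → ℝ) (lam : ℝ) : Set ℝ :=
  {x | ∃ a, a < x ∧ F f lam a < F f lam x}

variable {f : ℝ → ℝ} {lam : ℝ}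

lemma F_cont (hint : Integrable f) : Continuous (F f lam) :=
  (hint.continuous_primitive 0).sub (continuous_const.mul continuous_id)

lemma F_sub (hint : Integrable f) (a x : ℝ) :
    F f lam x - F f lam a = (∫ t in a..x, f t) - lam * (x - a) := by
  have h := intervalIntegral.integral_add_adjacent_intervals
    (hint.intervalIntegrable (a := (0:ℝ)) (b := a))
    (hint.intervalIntegrable (a := a) (b := x))
  simp only [F]; linarith

lemma int_le (hf : 0 ≤ f) (hint : Integrable f) {a b : ℝ} (hab : a ≤ b) :
    (∫ t in a..b, f t) ≤ ∫ t, f t := by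
  rw [intervalIntegral.integral_of_le hab]
  exact setIntegral_le_integral hint (Filter.Eventually.of_forall hf)

lemma F_lower (hf : 0 ≤ f) (hint : Integrable f) {x : ℝ} (hx : x ≤ 0) :
    -(∫ t, f t) - lam * x ≤ F f lam x := by
  have h1 : (∫ t in x..(0:ℝ), f t) ≤ ∫ t, f t := int_le hf hint hx
  have h2 : (∫ t in (0:ℝ)..x, f t) = -∫ t in x..(0:ℝ), f t :=
    intervalIntegral.integral_symm x 0
  simp only [F]; linarith

lemma F_upper (hf : 0 ≤ f) (hint : Integrable f) {x : ℝ} (hx : 0 ≤ x) :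
    F f lam x ≤ (∫ t, f t) - lam * x := by
  have h1 := int_le hf hint hx
  simp only [F]; linarith

lemma notMem_U_iff {x : ℝ} : x ∉ Uset f lam ↔ ∀ y < x, F f lam x ≤ F f lam y := by
  simp [Uset, not_lt]

lemma isOpen_U (hint : Integrable f) : IsOpen (Uset f lam) := by
  have : Uset f lam = ⋃ a : ℝ, (Ioi a ∩ {x | F f lam a < F f lam x}) := by
    ext x; simp [Uset, mem_iUnion, and_comm]
  rw [this]
  exact isOpen_iUnion fun a => isOpen_Ioi.inter
    (isOpen_lt continuous_const (F_cont hint))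

lemma exists_min (hf : 0 ≤ f) (hint : Integrable f) (hlam : 0 < lam) (x : ℝ) :
    ∃ c ≤ x, ∀ y ≤ x, F f lam c ≤ F f lam y := by
  set I := ∫ t, f t with hI
  set T := min (min x 0) ((-I - F f lam x) / lam) with hT
  have hTx : T ≤ x := le_trans (min_le_left _ _) (min_le_left _ _)
  have hkey : ∀ t ≤ T, F f lam x ≤ F f lam t := by
    intro t ht
    have ht0 : t ≤ 0 := le_trans ht (le_trans (min_le_left _ _) (min_le_right _ _))
    have h1 := F_lower (lam := lam) hf hint ht0
    have h2 : t ≤ (-I - F f lam x) / lam := le_trans ht (min_le_right _ _)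
    have h3 : t * lam ≤ -I - F f lam x := (le_div_iff₀ hlam).mp h2
    nlinarith
  obtain ⟨c, hc, hmin⟩ := (isCompact_Icc (a := T) (b := x)).exists_isMinOn
    ⟨x, hTx, le_refl x⟩ (F_cont hint).continuousOn
  refine ⟨c, hc.2, fun y hy => ?_⟩
  rcases le_or_gt T y with h | h
  · exact isMinOn_iff.mp hmin y ⟨h, hy⟩
  · exact le_trans (isMinOn_iff.mp hmin x ⟨hTx, le_refl x⟩) (hkey y h.le)

lemma mem_U_iff (hint : Integrable f) (hlam : 0 < lam) (x : ℝ) :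
    ENNReal.ofReal lam < ML f x ↔ x ∈ Uset f lam := by
  simp only [ML, lt_iSup_iff, Uset, mem_setOf_eq]
  constructor
  · rintro ⟨a, hax, h⟩
    have h' : lam < (x - a)⁻¹ * ∫ t in a..x, f t :=
      (ENNReal.ofReal_lt_ofReal_iff_of_nonneg hlam.le).mp h
    have hxa : 0 < x - a := sub_pos.mpr hax
    rw [inv_mul_eq_div, lt_div_iff₀ hxa] at h'
    have hs := F_sub (lam := lam) hint a x
    exact ⟨a, hax, by linarith⟩
  · rintro ⟨a, hax, h⟩
    have hxa : 0 < x - a := sub_pos.mpr hax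
    have hs := F_sub (lam := lam) hint a x
    have h' : lam < (x - a)⁻¹ * ∫ t in a..x, f t := by
      rw [inv_mul_eq_div, lt_div_iff₀ hxa]; linarith
    exact ⟨a, hax, (ENNReal.ofReal_lt_ofReal_iff_of_nonneg hlam.le).mpr h'⟩

/-- Structure of a connected component of `Uset`. -/
lemma component_eq (hf : 0 ≤ f) (hint : Integrable f) (hlam : 0 < lam) {x₀ : ℝ}
    (hx₀ : x₀ ∈ Uset f lam) :
    ∃ a b : ℝ, a < b ∧ connectedComponentIn (Uset f lam) x₀ = Ioo a b ∧
      lam * (b - a) = ∫ t in a..b, f t := by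
  set U := Uset f lam with hUdef
  have hU : IsOpen U := isOpen_U hint
  set s := connectedComponentIn U x₀ with hs
  have hs_open : IsOpen s := hU.connectedComponentIn
  have hs_conn : IsPreconnected s := isPreconnected_connectedComponentIn
  have hs_sub : s ⊆ U := connectedComponentIn_subset _ _
  have hx₀s : x₀ ∈ s := mem_connectedComponentIn hx₀
  -- the running-minimum point below x₀
  obtain ⟨c₀, hc₀x, hc₀min⟩ := exists_min hf hint hlam x₀
  have hc₀U : c₀ ∉ U := notMem_U_iff.mpr fun y hy => hc₀min y (hy.le.trans hc₀x)
  have hc₀lt : c₀ < x₀ := by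
    rcases hx₀ with ⟨a, hax, hFa⟩
    rcases lt_or_eq_of_le hc₀x with h | h
    · exact h
    · exact absurd (hc₀min a hax.le) (by rw [h]; exact not_le.mpr hFa)
  -- bddBelow
  have hbb : BddBelow s := by
    refine ⟨c₀, fun y hy => ?_⟩
    by_contra h
    push_neg at h
    exact hc₀U (hs_sub (hs_conn.Icc_subset hy hx₀s ⟨h.le, hc₀x⟩))
  -- bddAbove
  have hba : BddAbove s := by
    by_contra h
    set I := ∫ t, f t with hI
    set x := max (max x₀ 0) ((I - F f lam c₀) / lam) + 1 with hx
    have hm1 : x₀ ≤ max (max x₀ 0) ((I - F f lam c₀) / lam) :=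
      le_trans (le_max_left x₀ 0) (le_max_left _ _)
    have hm2 : (0:ℝ) ≤ max (max x₀ 0) ((I - F f lam c₀) / lam) :=
      le_trans (le_max_right x₀ 0) (le_max_left _ _)
    have hm3 : (I - F f lam c₀) / lam ≤ max (max x₀ 0) ((I - F f lam c₀) / lam) :=
      le_max_right _ _
    have hxx₀ : x₀ ≤ x := by rw [hx]; linarith
    have hx0 : (0:ℝ) ≤ x := by rw [hx]; linarith
    have hxgt : (I - F f lam c₀) / lam < x := by rw [hx]; linarith
    have hFx : F f lam x < F f lam c₀ := by
      have h1 := F_upper (lam := lam) hf hint hx0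
      have h2 : I - F f lam c₀ < lam * x := by
        rw [div_lt_iff₀ hlam] at hxgt; linarith
      linarith
    obtain ⟨c₁, hc₁x, hc₁min⟩ := exists_min hf hint hlam x
    have hc₁U : c₁ ∉ U := notMem_U_iff.mpr fun y hy => hc₁min y (hy.le.trans hc₁x)
    have hc₁F : F f lam c₁ < F f lam c₀ := lt_of_le_of_lt (hc₁min x (le_refl x)) hFx
    have hc₁gt : x₀ < c₁ := by
      by_contra hle
      push_neg at hle
      exact absurd (hc₀min c₁ hle) (not_le.mpr hc₁F)
    obtain ⟨z, hzs, hzx⟩ := not_bddAbove_iff.mp h x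
    exact hc₁U (hs_sub (hs_conn.Icc_subset hx₀s hzs ⟨hc₁gt.le, hc₁x.trans hzx.le⟩))
  set a := sInf s with ha
  set b := sSup s with hb
  have hsne : s.Nonempty := ⟨x₀, hx₀s⟩
  have hsub_Icc : s ⊆ Icc a b := subset_Icc_csInf_csSup hbb hba
  have hIoo_sub : Ioo a b ⊆ s := (IsConnected.Ioo_csInf_csSup_subset ⟨hsne, hs_conn⟩ hbb hba)
  have hans : a ∉ s := by
    intro hmem
    obtain ⟨ε, hε, hball⟩ := Metric.isOpen_iff.mp hs_open a hmem
    have : a - ε / 2 ∈ s := hball (by simp [Real.dist_eq, abs_of_nonpos, hε.le]; rw [abs_of_pos (by linarith)]; linarith)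
    linarith [csInf_le hbb this]
  have hbns : b ∉ s := by
    intro hmem
    obtain ⟨ε, hε, hball⟩ := Metric.isOpen_iff.mp hs_open b hmem
    have : b + ε / 2 ∈ s := hball (by rw [Metric.mem_ball, Real.dist_eq, abs_of_pos (by linarith)]; linarith)
    linarith [le_csSup hba this]
  have hseq : s = Ioo a b := by
    refine Subset.antisymm (fun y hy => ?_) hIoo_sub
    rcases hsub_Icc hy with ⟨h1, h2⟩
    refine ⟨lt_of_le_of_ne h1 ?_, lt_of_le_of_ne h2 ?_⟩
    · rintro rfl; exact hans hy
    · rintro rfl; exact hbns hy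
  have hab : a < b := by
    have := hseq ▸ hx₀s; exact lt_trans this.1 this.2
  -- endpoints not in U
  have hnotU : ∀ e ∈ ({a, b} : Set ℝ), e ∉ U := by
    intro e he heU
    have hecl : e ∈ closure s := by
      rw [hseq, closure_Ioo hab.ne]
      rcases he with rfl | rfl
      · exact ⟨le_refl _, hab.le⟩
      · exact ⟨hab.le, le_refl _⟩
    have hopen : IsOpen (connectedComponentIn U e) := hU.connectedComponentIn
    obtain ⟨y, hys', hys⟩ := _root_.mem_closure_iff.mp hecl _ hopen (mem_connectedComponentIn heU)
    have h1 : connectedComponentIn U e = connectedComponentIn U y := connectedComponentIn_eq hys'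
    have h2 : connectedComponentIn U x₀ = connectedComponentIn U y := connectedComponentIn_eq hys
    have : e ∈ s := by
      rw [hs, h2, ← h1]; exact mem_connectedComponentIn heU
    rw [hseq] at this
    rcases he with rfl | rfl
    · exact lt_irrefl _ this.1
    · exact lt_irrefl _ this.2
  have haU : a ∉ U := hnotU a (Or.inl rfl)
  have hbU : b ∉ U := hnotU b (Or.inr rfl)
  have haU' := notMem_U_iff.mp haU
  have hbU' := notMem_U_iff.mp hbU
  -- F a ≤ F x on the component
  have hFax : ∀ x ∈ Ioo a b, F f lam a ≤ F f lam x := by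
    rintro x ⟨hax, hxb⟩
    by_contra hcon
    push_neg at hcon
    obtain ⟨c, hc, hmin⟩ := (isCompact_Icc (a := a) (b := x)).exists_isMinOn
      ⟨a, le_refl a, hax.le⟩ (F_cont hint).continuousOn
    have hmin' := isMinOn_iff.mp hmin
    have hFc : F f lam c ≤ F f lam x := hmin' x ⟨hax.le, le_refl x⟩
    have hca : a < c := by
      rcases lt_or_eq_of_le hc.1 with h | h
      · exact h
      · exfalso; rw [← h] at hFc; linarith
    have hcU : c ∈ U := hs_sub (hseq ▸ (⟨hca, lt_of_le_of_lt hc.2 hxb⟩ : c ∈ Ioo a b))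
    obtain ⟨y, hyc, hFy⟩ := hcU
    rcases le_or_gt a y with h | h
    · exact absurd (hmin' y ⟨h, hyc.le.trans hc.2⟩) (not_le.mpr hFy)
    · have := haU' y h
      linarith [hmin' x ⟨hax.le, le_refl x⟩]
  -- F a ≤ F b by continuity
  have hFab : F f lam a ≤ F f lam b := by
    have hcl : b ∈ closure (Ioo a b) := by
      rw [closure_Ioo hab.ne]; exact ⟨hab.le, le_refl _⟩
    haveI : (nhdsWithin b (Ioo a b)).NeBot := mem_closure_iff_nhdsWithin_neBot.mp hcl
    refine ge_of_tendsto ((F_cont (lam := lam) hint).continuousWithinAt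
      (s := Ioo a b) (x := b)) ?_
    filter_upwards [self_mem_nhdsWithin] with x hx
    exact hFax x hx
  have hFba : F f lam b ≤ F f lam a := hbU' a hab
  have hFeq : F f lam a = F f lam b := le_antisymm hFab hFba
  refine ⟨a, b, hab, hseq, ?_⟩
  have := F_sub (lam := lam) hint a b
  linarith

/-- measure identity on one component -/
lemma comp_measure (hf : 0 ≤ f) (hint : Integrable f) (hlam : 0 < lam) {a b : ℝ}
    (hab : a < b) (heq : lam * (b - a) = ∫ t in a..b, f t) :
    ENNReal.ofReal lam * volume (Ioo a b) = ∫⁻ t in Ioo a b, ENNReal.ofReal (f t) := by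
  rw [Real.volume_Ioo, ← ENNReal.ofReal_mul hlam.le, heq,
    intervalIntegral.integral_of_le hab.le,
    ofReal_integral_eq_lintegral_ofReal hint.integrableOn (ae_of_all _ hf)]
  rw [← Measure.restrict_congr_set Ioo_ae_eq_Ioc]

end SunriseAux

open SunriseAux

/-- Sunrise lemma, left version: `λ |C_λ| = ∫_{C_λ} f`. -/
theorem sunrise_left (f : ℝ → ℝ) (hf : 0 ≤ f) (hint : Integrable f)
    (lam : ℝ) (hlam : 0 < lam) :
    ENNReal.ofReal lam * volume {x | ENNReal.ofReal lam < ML f x}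
      = ∫⁻ t in {x | ENNReal.ofReal lam < ML f x}, ENNReal.ofReal (f t) := by
  have hUeq : {x | ENNReal.ofReal lam < ML f x} = Uset f lam :=
    Set.ext fun x => mem_U_iff hint hlam x
  rw [hUeq]
  have hU : IsOpen (Uset f lam) := isOpen_U hint
  set U := Uset f lam with hUdef
  set C : Set (Set ℝ) := (connectedComponentIn U) '' U with hC
  have hmemC : ∀ s ∈ C, ∃ a b : ℝ, a < b ∧ s = Ioo a b ∧
      lam * (b - a) = ∫ t in a..b, f t := by
    rintro s ⟨x, hx, rfl⟩
    exact component_eq hf hint hlam hx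
  have hpd : C.PairwiseDisjoint id := by
    rintro s hs t ht hst
    obtain ⟨x, hx, rfl⟩ := hs
    obtain ⟨y, hy, rfl⟩ := ht
    refine disjoint_left.mpr fun z hzs hzt => hst ?_
    simp only [id] at hzs hzt ⊢
    rw [connectedComponentIn_eq hzs, connectedComponentIn_eq hzt]
  have hcount : C.Countable := by
    refine hpd.countable_of_isOpen (fun s hs => ?_) (fun s hs => ?_)
    · obtain ⟨x, hx, rfl⟩ := hs; exact hU.connectedComponentIn
    · obtain ⟨x, hx, rfl⟩ := hs; exact ⟨x, mem_connectedComponentIn hx⟩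
  have hUU : U = ⋃₀ C := by
    apply Subset.antisymm
    · intro x hx
      exact ⟨_, ⟨x, hx, rfl⟩, mem_connectedComponentIn hx⟩
    · rintro x ⟨s, ⟨y, hy, rfl⟩, hxs⟩
      exact connectedComponentIn_subset _ _ hxs
  rw [hUU, sUnion_eq_iUnion]
  haveI := hcount.to_subtype
  have hmeas : ∀ s : ↥C, MeasurableSet (s : Set ℝ) := by
    rintro ⟨s, x, hx, rfl⟩
    exact hU.connectedComponentIn.measurableSet
  have hdisj : Pairwise (Function.onFun Disjoint fun s : ↥C => (s : Set ℝ)) := by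
    intro i j hij
    exact hpd i.2 j.2 (fun h => hij (Subtype.ext h))
  rw [measure_iUnion hdisj hmeas, lintegral_iUnion hmeas hdisj, ← ENNReal.tsum_mul_left]
  refine tsum_congr fun s => ?_
  obtain ⟨a, b, hab, hseq, heq⟩ := hmemC s s.2
  rw [hseq]
  exact comp_measure hf hint hlam hab heq
end

section
/- Let f_0(t) = |t|^{-1/p} for 1 < p < ∞. Then the uncentered maximal function of f_0 at the point 1 equals (p/(p-1)) · (γ^{1/p'} + 1)/(γ + 1), where γ is the unique positive solution of (p/(p-1)) · (γ^{1/p'} + 1)/(γ + 1) = γ^{-1/p}, and p' = p/(p-1). -/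
open MeasureTheory Set
open scoped ENNReal

/-- The uncentered Hardy-Littlewood maximal function over intervals. -/
noncomputable def M (f : ℝ → ℝ) (x : ℝ) : ℝ≥0∞ :=
  ⨆ (a : ℝ) (b : ℝ) (_ : a ≤ x) (_ : x ≤ b) (_ : a < b),
    ENNReal.ofReal ((b - a)⁻¹ * ∫ t in a..b, f t)

/-!
Write `r = -1/p ∈ (-1, 0)` and `V = γ ^ r`. Since `∫_{-x}^{y} |t|^r = (x^(r+1) + y^(r+1))/(r+1)`,
the equation for `γ` says exactly that the average of `|t|^r` over `[-γ, 1]` is `V`; it also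
forces `γ ≤ 1`. As `|t|^r ≥ V` on `[-γ, γ]` and `|t|^r ≤ V` off it, moving the endpoints of
`[-γ, 1]` cannot raise the average: extending the interval only adds mass where `|t|^r ≤ V`,
shrinking it from the left only removes mass where `|t|^r ≥ V`.
-/

open intervalIntegral

section AbsRpow

variable {r : ℝ}

lemma locallyIntegrable_abs_rpow (hr : -1 < r) : LocallyIntegrable (fun t : ℝ => |t| ^ r) :=
  locallyIntegrable_of_norm_le_rpow (C := 1) (α := -r) (by simp) (by simpa [neg_lt] using hr)
    (Filter.Eventually.of_forall fun t => by
      simp [abs_of_nonneg (Real.rpow_nonneg (abs_nonneg t) r)])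
    (continuous_abs.measurable.pow_const r).aestronglyMeasurable

lemma intervalIntegrable_abs_rpow (hr : -1 < r) (a b : ℝ) :
    IntervalIntegrable (fun t : ℝ => |t| ^ r) volume a b :=
  ((locallyIntegrable_abs_rpow hr).integrableOn_isCompact isCompact_uIcc).intervalIntegrable

lemma integral_abs_rpow_of_nonneg (hr : -1 < r) {x y : ℝ} (hx : 0 ≤ x) (hy : 0 ≤ y) :
    ∫ t in -x..y, |t| ^ r = (x ^ (r + 1) + y ^ (r + 1)) / (r + 1) := by
  have from_zero : ∀ z, 0 ≤ z → ∫ t in 0..z, |t| ^ r = z ^ (r + 1) / (r + 1) := fun z hz => by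
    rw [integral_congr (g := fun t => t ^ r)
        fun t ht => by rw [abs_of_nonneg (uIcc_of_le hz ▸ ht).1],
      integral_rpow (Or.inl hr), Real.zero_rpow (by linarith), sub_zero]
  have to_zero : ∫ t in -x..0, |t| ^ r = ∫ t in 0..x, |t| ^ r := by
    simpa using (integral_comp_neg (fun t => |t| ^ r) (a := 0) (b := x)).symm
  rw [← integral_add_adjacent_intervals (intervalIntegrable_abs_rpow hr _ 0)
    (intervalIntegrable_abs_rpow hr 0 _), to_zero, from_zero x hx, from_zero y hy, add_div]

end AbsRpow

section Averages

variable {f : ℝ → ℝ} {V a b : ℝ}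

lemma integral_le_mul_sub_of_forall_le (hab : a ≤ b) (hf : IntervalIntegrable f volume a b)
    (h : ∀ t ∈ Icc a b, f t ≤ V) : ∫ t in a..b, f t ≤ V * (b - a) := by
  simpa [mul_comm] using integral_mono_on hab hf intervalIntegrable_const h

lemma mul_sub_le_integral_of_ae_le (hab : a ≤ b) (hf : IntervalIntegrable f volume a b)
    (h : ∀ᵐ t, t ∈ Icc a b → V ≤ f t) : V * (b - a) ≤ ∫ t in a..b, f t := by
  simpa [mul_comm] using integral_mono_ae_restrict hab intervalIntegrable_const hf
    ((ae_restrict_iff' measurableSet_Icc).2 h)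

lemma integral_le_mul_sub_of_integral_eq {c d e : ℝ}
    (hf : ∀ x y, IntervalIntegrable f volume x y) (hde : d ≤ e)
    (hge : ∀ᵐ t, t ∈ Icc c d → V ≤ f t) (hle : ∀ t, t ≤ c ∨ d ≤ t → f t ≤ V)
    (hmean : ∫ t in c..e, f t = V * (e - c)) (ha : a ≤ e) (hb : e ≤ b) :
    ∫ t in a..b, f t ≤ V * (b - a) := by
  have right : ∫ t in e..b, f t ≤ V * (b - e) :=
    integral_le_mul_sub_of_forall_le hb (hf e b) fun t ht => hle t (Or.inr (hde.trans ht.1))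
  have left : ∫ t in a..e, f t ≤ V * (e - a) := by
    rcases le_or_gt a c with hac | hca
    · have : ∫ t in a..c, f t ≤ V * (c - a) :=
        integral_le_mul_sub_of_forall_le hac (hf a c) fun t ht => hle t (Or.inl ht.2)
      rw [← integral_add_adjacent_intervals (hf a c) (hf c e)]
      linarith
    rcases le_or_gt a d with had | hda
    · have : V * (a - c) ≤ ∫ t in c..a, f t :=
        mul_sub_le_integral_of_ae_le hca.le (hf c a)
          (hge.mono fun t h ht => h ⟨ht.1, ht.2.trans had⟩)
      rw [← integral_add_adjacent_intervals (hf c a) (hf a e)] at hmean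
      linarith
    · exact integral_le_mul_sub_of_forall_le ha (hf a e) fun t ht =>
        hle t (Or.inr (hda.le.trans ht.1))
  rw [← integral_add_adjacent_intervals (hf a e) (hf e b)]
  linarith

lemma M_eq_ofReal_of_integral_le {x a₀ b₀ : ℝ}
    (hle : ∀ a b, a ≤ x → x ≤ b → ∫ t in a..b, f t ≤ V * (b - a))
    (ha₀ : a₀ ≤ x) (hb₀ : x ≤ b₀) (hab₀ : a₀ < b₀)
    (heq : ∫ t in a₀..b₀, f t = V * (b₀ - a₀)) :
    M f x = ENNReal.ofReal V := by
  refine le_antisymm (iSup_le fun a => iSup_le fun b => iSup_le fun ha => iSup_le fun hb =>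
    iSup_le fun hab => ENNReal.ofReal_le_ofReal ?_) ?_
  · rw [inv_mul_le_iff₀ (sub_pos.2 hab), mul_comm]
    exact hle a b ha hb
  · refine le_iSup_of_le a₀ <| le_iSup_of_le b₀ <| le_iSup_of_le ha₀ <| le_iSup_of_le hb₀ <|
      le_iSup_of_le hab₀ ?_
    rw [heq, mul_comm V, ← mul_assoc, inv_mul_cancel₀ (sub_pos.2 hab₀).ne', one_mul]

end Averages

/-- For `f₀(t) = |t|^(-1/p)`, the value of the uncentered maximal function at
`1` equals `(p/(p-1))·(γ^(1/p') + 1)/(γ + 1)` where `γ > 0` solves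
`(p/(p-1))·(γ^(1/p') + 1)/(γ + 1) = γ^(-1/p)` and `1/p' = (p-1)/p`. -/
theorem maximal_of_power_at_one (p γ : ℝ) (hp : 1 < p) (hγ : 0 < γ)
    (hγeq : p / (p - 1) * ((γ ^ ((p - 1) / p) + 1) / (γ + 1)) = γ ^ (-(1 / p))) :
    M (fun t => |t| ^ (-(1 / p))) 1
      = ENNReal.ofReal (p / (p - 1) * ((γ ^ ((p - 1) / p) + 1) / (γ + 1))) := by
  set r := -(1 / p) with hr
  have hr1 : -1 < r := by rw [hr, neg_lt_neg_iff, div_lt_one (by linarith)]; exact hp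
  have hr0 : r < 0 := by rw [hr, neg_lt_zero]; positivity
  have hexp : (p - 1) / p = r + 1 := by rw [hr]; field_simp; ring
  rw [hexp, ← inv_div, hexp] at hγeq ⊢
  rw [hγeq]
  have hmean : ∫ t in -γ..1, |t| ^ r = γ ^ r * (1 - -γ) := by
    rw [integral_abs_rpow_of_nonneg hr1 hγ.le zero_le_one, Real.one_rpow, ← hγeq]
    field_simp
    ring
  have hγ1 : γ ≤ 1 := by
    -- otherwise `γ^r γ + 1 = (r+1)(γ+1) γ^r < γ^r γ + γ^r < γ^r γ + 1`
    by_contra! h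
    have hV1 : γ ^ r < 1 := Real.rpow_lt_one_of_one_lt_of_neg h hr0
    have hVpos : 0 < γ ^ r := Real.rpow_pos_of_pos hγ r
    have hr1ne : r + 1 ≠ 0 := by linarith
    rw [Real.rpow_add_one hγ.ne'] at hγeq
    field_simp at hγeq
    nlinarith [mul_neg_of_pos_of_neg (mul_pos hVpos (by linarith : 0 < γ + 1)) hr0]
  refine M_eq_ofReal_of_integral_le (fun a b ha hb => integral_le_mul_sub_of_integral_eq
      (intervalIntegrable_abs_rpow hr1) hγ1 ?_ ?_ hmean ha hb)
    (by linarith) le_rfl (by linarith) hmean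
  · filter_upwards [Measure.ae_ne volume 0] with t ht0 ht
    exact Real.rpow_le_rpow_of_nonpos (abs_pos.2 ht0) (abs_le.2 ht) hr0.le
  · rintro t (ht | ht)
    · exact Real.rpow_le_rpow_of_nonpos hγ (le_abs.2 (Or.inr (by linarith))) hr0.le
    · exact Real.rpow_le_rpow_of_nonpos hγ (le_abs.2 (Or.inl ht)) hr0.le
end

section
/- With γ the unique positive solution to (p/(p-1))·(γ^{1/p'}+1)/(γ+1) = γ^{-1/p} and 1 < p < ∞, p' = p/(p-1), the value x = (p/(p-1))·(γ^{1/p'}+1)/(γ+1) satisfies (p-1)x^p − p x^{p-1} − 1 = 0. -/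
/-! Substitute `γ = t ^ p` with `t > 0`. Then `γ ^ (1/p') = t ^ (p-1)` and `γ ^ (-1/p) = t⁻¹`, so
the defining equation says `x = t⁻¹` and, after clearing denominators, `t ^ p + p t = p - 1`.
Multiplying `(p-1) x ^ p - p x ^ (p-1) - 1` by `t ^ p` gives exactly `p - 1 - p t - t ^ p = 0`. -/

namespace Real

lemma rpow_rpow_div_self {t : ℝ} (ht : 0 ≤ t) {p : ℝ} (hp : p ≠ 0) (q : ℝ) :
    (t ^ p) ^ (q / p) = t ^ q := by
  rw [← rpow_mul ht, mul_div_cancel₀ q hp]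

lemma rpow_eq_rpow_sub_one_mul {t : ℝ} (ht : 0 < t) (p : ℝ) : t ^ p = t ^ (p - 1) * t := by
  rw [← rpow_add_one ht.ne', sub_add_cancel]

lemma rpow_add_mul_eq_sub_one_of_ratio_eq {p t : ℝ} (hp : 1 < p) (ht : 0 < t)
    (h : p / (p - 1) * ((t ^ (p - 1) + 1) / (t ^ p + 1)) = t⁻¹) :
    t ^ p + p * t = p - 1 := by
  have hp1 : p - 1 ≠ 0 := by linarith
  rw [rpow_eq_rpow_sub_one_mul ht p] at h ⊢
  field_simp at h
  linear_combination h

lemma sub_one_mul_inv_rpow_sub_mul_inv_rpow_sub_one {p t : ℝ} (ht : 0 < t)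
    (h : t ^ p + p * t = p - 1) :
    (p - 1) * t⁻¹ ^ p - p * t⁻¹ ^ (p - 1) - 1 = 0 := by
  rw [inv_rpow ht.le, inv_rpow ht.le, rpow_eq_rpow_sub_one_mul ht p]
  rw [rpow_eq_rpow_sub_one_mul ht p] at h
  field_simp
  linear_combination -h

end Real

/-- If `γ > 0` solves `(p/(p-1))·(γ^(1/p') + 1)/(γ + 1) = γ^(-1/p)` with
`1/p' = (p-1)/p`, then `x = (p/(p-1))·(γ^(1/p') + 1)/(γ + 1)` is a root of
`(p-1)x^p - px^(p-1) - 1 = 0`. -/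
theorem gamma_value_is_root (p γ : ℝ) (hp : 1 < p) (hγ : 0 < γ)
    (hγeq : p / (p - 1) * ((γ ^ ((p - 1) / p) + 1) / (γ + 1)) = γ ^ (-(1 / p))) :
    (p - 1) * (p / (p - 1) * ((γ ^ ((p - 1) / p) + 1) / (γ + 1))) ^ p
      - p * (p / (p - 1) * ((γ ^ ((p - 1) / p) + 1) / (γ + 1))) ^ (p - 1)
      - 1 = 0 := by
  have hp0 : p ≠ 0 := by positivity
  obtain ⟨t, ht, rfl⟩ : ∃ t > 0, γ = t ^ p :=
    ⟨γ ^ p⁻¹, Real.rpow_pos_of_pos hγ _, (Real.rpow_inv_rpow hγ.le hp0).symm⟩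
  have hx : (t ^ p) ^ (-(1 / p)) = t⁻¹ := by
    rw [← neg_div, Real.rpow_rpow_div_self ht.le hp0, Real.rpow_neg_one]
  rw [Real.rpow_rpow_div_self ht.le hp0, hx] at hγeq
  rw [Real.rpow_rpow_div_self ht.le hp0, hγeq]
  exact Real.sub_one_mul_inv_rpow_sub_mul_inv_rpow_sub_one ht
    (Real.rpow_add_mul_eq_sub_one_of_ratio_eq hp ht hγeq)
end
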